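/- Let 0 → M → ĝ →p g → 0 be an abelian extension of Rota-Baxter pre-Lie algebras of weight λ with section s, and ψ(a⊗b) := s(a)·̂s(b) - s(a·b), χ(a) := T̂(s(a)) - s(T(a)). Then for all a,b ∈ g: T(a)·χ(b) + χ(a)·T(b) + ψ(T(a)⊗T(b)) = T_M(χ(a)·b) + T_M(ψ(T(a)⊗b)) + χ(T(a)·b) + T_M(a·χ(b)) + T_M(ψ(a⊗T(b))) + χ(a·T(b)) + λT_M(ψ(a⊗b)) + λχ(a·b). -/
import Mathlib


/-- `ψ(a⊗b) := s(a)·̂s(b) - s(a·b)`. -/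
def extPsi {k : Type*} [Field k] [CharZero k]
    {G H : Type*} [AddCommGroup G] [Module k G] [AddCommGroup H] [Module k H]
    (mulG : G →ₗ[k] G →ₗ[k] G) (mulH : H →ₗ[k] H →ₗ[k] H)
    (s : G →ₗ[k] H) (a b : G) : H :=
  mulH (s a) (s b) - s (mulG a b)

/-- `χ(a) := T̂(s(a)) - s(T(a))`. -/
def extChi {k : Type*} [Field k] [CharZero k]
    {G H : Type*} [AddCommGroup G] [Module k G] [AddCommGroup H] [Module k H]
    (T : G →ₗ[k] G) (Th : H →ₗ[k] H) (s : G →ₗ[k] H) (a : G) : H :=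
  Th (s a) - s (T a)

/-- The Rota-Baxter component of the 2-cocycle condition for (ψ, χ).
Here the bimodule actions are `a·m = s(a)·̂m`, `m·a = m·̂s(a)` and `T_M` is the
restriction of `T̂` to `M`. -/
theorem stmt13 {k : Type*} [Field k] [CharZero k]
    {G H : Type*} [AddCommGroup G] [Module k G] [AddCommGroup H] [Module k H]
    (lam : k)
    (mulG : G →ₗ[k] G →ₗ[k] G) (T : G →ₗ[k] G)
    (mulH : H →ₗ[k] H →ₗ[k] H) (Th : H →ₗ[k] H)
    (M : Submodule k H) (p : H →ₗ[k] G)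
    (hpsurj : Function.Surjective p)
    (hker : LinearMap.ker p = M)
    (hpreG : ∀ x y z : G, mulG (mulG x y) z - mulG x (mulG y z)
      = mulG (mulG y x) z - mulG y (mulG x z))
    (hpreH : ∀ x y z : H, mulH (mulH x y) z - mulH x (mulH y z)
      = mulH (mulH y x) z - mulH y (mulH x z))
    (hRBG : ∀ a b : G, mulG (T a) (T b)
      = T (mulG a (T b) + mulG (T a) b + lam • mulG a b))
    (hRBH : ∀ a b : H, mulH (Th a) (Th b)
      = Th (mulH a (Th b) + mulH (Th a) b + lam • mulH a b))
    (hpmul : ∀ x y : H, p (mulH x y) = mulG (p x) (p y))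
    (hpT : ∀ x : H, p (Th x) = T (p x))
    (hMtriv : ∀ u ∈ M, ∀ v ∈ M, mulH u v = 0)
    (hThM : ∀ m ∈ M, Th m ∈ M)
    (s : G →ₗ[k] H) (hs : ∀ a : G, p (s a) = a) :
    ∀ a b : G,
      mulH (s (T a)) (extChi T Th s b) + mulH (extChi T Th s a) (s (T b))
      + extPsi mulG mulH s (T a) (T b)
      = Th (mulH (extChi T Th s a) (s b)) + Th (extPsi mulG mulH s (T a) b)
      + extChi T Th s (mulG (T a) b)
      + Th (mulH (s a) (extChi T Th s b)) + Th (extPsi mulG mulH s a (T b))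
      + extChi T Th s (mulG a (T b))
      + lam • Th (extPsi mulG mulH s a b) + lam • extChi T Th s (mulG a b) := by
  intro a b
  have hchiM : ∀ c : G, Th (s c) - s (T c) ∈ M := by
    intro c
    rw [← hker, LinearMap.mem_ker, map_sub, hpT, hs, hs]
    simp
  have h0 : mulH (Th (s a) - s (T a)) (Th (s b) - s (T b)) = 0 :=
    hMtriv _ (hchiM a) _ (hchiM b)
  have h1 := hRBH (s a) (s b)
  have h2 := congrArg s (hRBG a b)
  simp only [extPsi, extChi, map_add, map_sub, map_smul, LinearMap.sub_apply,
    LinearMap.add_apply, LinearMap.smul_apply] at h0 h1 h2 ⊢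
  rw [h1] at h0
  rw [h2]
  rw [sub_eq_zero] at h0
  rw [← sub_eq_zero] at h0 ⊢
  rw [← neg_eq_zero] at h0
  rw [← h0]
  module
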